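/- Let M₁ and M₂ be effective t-motifs over K, and write Mᵢ(t) = Mᵢ ⊗_{K[t]} K(t), with σ extended τ-semilinearly to Mᵢ(t) by σ(m⊗f) = σ(m)⊗τ(f). Then for every K(t)-linear map g : M₁(t) → M₂(t) satisfying g∘σ = σ∘g there exist a nonzero polynomial h ∈ K[t] with all coefficients c satisfying c^q = c (i.e. h has coefficients in k) and a morphism f ∈ Hom_σ(M₁,M₂) such that h·g equals the map f ⊗ id_{K(t)} induced by f. (Together with the evident injectivity, this says the natural map Hom_σ(M₁,M₂) ⊗_{k[t]} k(t) → Hom_{K(t)[σ]}(M₁(t),M₂(t)) is an isomorphism.) -/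

import Mathlib

/-!
STATEMENT 2. An effective t-motif over `K` is a free finitely generated `K[t]`-module `M`
with a `τ`-semilinear map `σ` whose determinant (on any basis) is `u·(t-θ)^d`, `u ∈ Kˣ`.
Choosing bases, we represent `Mᵢ` as the column module `Fin rᵢ → K[t]` with
`σᵢ(v) = Sᵢ ⬝ τ(v)`, where `Sᵢ` is the matrix of `σᵢ` (so `det Sᵢ = uᵢ (t-θ)^{dᵢ}`).
Then `Mᵢ(t) = Mᵢ ⊗_{K[t]} K(t)` is `Fin rᵢ → RatFunc K` with `σ` extended via `τ` on
`K(t)`; a `K(t)`-linear map `g : M₁(t) → M₂(t)` is a matrix `G` over `K(t)`, and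
`g∘σ = σ∘g` reads `G·S₁ = S₂·τ(G)`.  A morphism `f ∈ Hom_σ(M₁,M₂)` is a matrix `F` over
`K[t]` with `F·S₁ = S₂·τ(F)`, and `f ⊗ id` is `F` viewed over `K(t)`.

The statement: for every such `g` there are a nonzero `h ∈ k[t] ⊆ K[t]` (coefficients
fixed by `c ↦ c^q`) and a morphism `f = F ∈ Hom_σ(M₁,M₂)` with `h·g = f ⊗ id`.
-/

open Polynomial

set_option synthInstance.maxHeartbeats 1000000

/-- The extension of the coefficientwise `q`-th power map `τ` to `K(t)`. -/
noncomputable def tauRatFunc (p n : ℕ) [Fact p.Prime] (K : Type) [Field K] [CharP K p] :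
    RatFunc K →+* RatFunc K :=
  RatFunc.mapRingHom (Polynomial.mapRingHom (iterateFrobenius K p n))
    (by
      intro f hf
      rw [Submonoid.mem_comap]
      rw [mem_nonZeroDivisors_iff_ne_zero] at hf ⊢
      simpa using fun h =>
        hf (Polynomial.map_injective _ (iterateFrobenius K p n).injective (by simpa using h)))

/-!
Let `h₀` generate the ideal of all `h ∈ K[t]` for which `h • G` has polynomial entries. Since `h₀`
is coprime to the entries of `h₀ • G`, the polynomial `τ h₀` generates the same ideal for `τ G`.
The relations `det S₂ • τ G = adj S₂ * G * S₁` and `det S₁ • G = S₂ * τ G * adj S₁` then give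
`h₀ ∣ (t - θ)^d₁ * τ h₀` and `τ h₀ ∣ (t - θ)^d₂ * h₀`. Over an algebraic closure this says that
`x ↦ x^q` maps the roots of `h₀` into the roots together with `θ`, and that every root other than
`θ` is the `q`-th power of a root; counting shows that `x ↦ x^q` permutes the roots, so all of
them satisfy `x^(q^N) = x` for some `N > 0`. Hence `h₀` divides a power `h` of `t^(q^N) - t`,
which has coefficients in `k`, and `h • G` is a matrix over `K[t]` commuting with `σ` because
`τ h = h`.
-/

theorem Finset.image_subset_self_of_subset_insert {α : Type*} [DecidableEq α] {f : α → α}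
    {s : Finset α} (hf : Set.InjOn f s) {b : α} (h₁ : s.image f ⊆ insert b s)
    (h₂ : s.erase b ⊆ s.image f) : s.image f ⊆ s := by
  by_contra hsub
  obtain ⟨x, hx, hxs⟩ := Finset.not_subset.mp hsub
  have hxb : x = b := by simpa [hxs] using h₁ hx
  subst hxb
  have hcover : insert x s ⊆ s.image f := by
    rw [Finset.erase_eq_of_notMem hxs] at h₂
    exact Finset.insert_subset hx h₂
  have := Finset.card_le_card hcover
  rw [Finset.card_insert_of_notMem hxs, Finset.card_image_of_injOn hf] at this
  omega

theorem Set.MapsTo.iterate_factorial_card_apply {α : Type*} {f : α → α} {s : Finset α}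
    (hf : Set.InjOn f s) (hs : Set.MapsTo f s s) {a : α} (ha : a ∈ s) :
    f^[s.card.factorial] a = a := by
  have hid := Function.injective_iff_iterate_factorial_card_eq_id.mp (hs.restrict_inj.mpr hf)
  have hcard : Fintype.card (s : Set α) = s.card := by simp
  rw [hcard, hs.iterate_restrict] at hid
  exact congrArg Subtype.val (congrFun hid ⟨a, ha⟩)

theorem Polynomial.dvd_pow_natDegree_of_forall_isRoot {L : Type*} [Field L] [IsAlgClosed L]
    {f g : L[X]} (hf : f ≠ 0) (hg : g ≠ 0) (h : ∀ a, f.IsRoot a → g.IsRoot a) :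
    f ∣ g ^ f.natDegree := by
  classical
  refine (IsAlgClosed.splits f).dvd_of_roots_le_roots hf (Multiset.le_iff_count.mpr fun a => ?_)
  rw [roots_pow, Multiset.count_nsmul]
  by_cases ha : a ∈ f.roots
  · have hga : 1 ≤ g.roots.count a :=
      Multiset.one_le_count_iff_mem.mpr ((mem_roots hg).mpr (h a (isRoot_of_mem_roots ha)))
    calc f.roots.count a ≤ f.natDegree :=
          (Multiset.count_le_card a _).trans (card_roots' f)
      _ ≤ f.natDegree * g.roots.count a := Nat.le_mul_of_pos_right _ hga
  · simp [Multiset.count_eq_zero.mpr ha]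

theorem Polynomial.mapsTo_roots_of_dvd_map {L : Type*} [Field L] [DecidableEq L] {φ : L →+* L}
    (hφ : Function.Bijective φ) {f : L[X]} (hf : f ≠ 0) {θ : L} {d₁ d₂ : ℕ}
    (h₁ : f ∣ (X - C θ) ^ d₁ * f.map φ) (h₂ : f.map φ ∣ (X - C θ) ^ d₂ * f) :
    Set.MapsTo φ f.roots.toFinset f.roots.toFinset := by
  have hmem : ∀ a, a ∈ f.roots.toFinset ↔ f.IsRoot a := by simp [mem_roots hf]
  have hroot_map : ∀ a, f.IsRoot a → (f.map φ).IsRoot (φ a) := fun a ha => by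
    rw [IsRoot, eval_map_apply, ha.eq_zero, map_zero]
  suffices hsub : f.roots.toFinset.image φ ⊆ f.roots.toFinset from
    fun a ha => hsub (Finset.mem_image_of_mem φ ha)
  refine Finset.image_subset_self_of_subset_insert hφ.1.injOn (b := θ) ?_ ?_
  · intro y hy
    obtain ⟨a, ha, rfl⟩ := Finset.mem_image.mp hy
    have hroot := (hroot_map a ((hmem a).mp ha)).dvd h₂
    simp only [IsRoot, eval_mul, eval_pow, eval_sub, eval_X, eval_C, mul_eq_zero,
      pow_eq_zero_iff', sub_eq_zero] at hroot
    rw [Finset.mem_insert, hmem]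
    exact hroot.imp And.left id
  · intro a ha
    obtain ⟨hθ, ha⟩ := Finset.mem_erase.mp ha
    have hroot := ((hmem a).mp ha).dvd h₁
    simp only [IsRoot, eval_mul, eval_pow, eval_sub, eval_X, eval_C, mul_eq_zero,
      pow_eq_zero_iff', sub_eq_zero] at hroot
    obtain ⟨δ, rfl⟩ := hφ.2 a
    rw [eval_map_apply, map_eq_zero_iff φ hφ.1] at hroot
    exact Finset.mem_image_of_mem φ ((hmem δ).mpr (hroot.resolve_left (fun h => hθ h.1)))

theorem Polynomial.exists_map_iterateFrobenius_eq_self_of_dvd {K : Type*} [Field K] {p : ℕ}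
    [Fact p.Prime] [CharP K p] {n : ℕ} (hn : 0 < n) {f : K[X]} (hf : f ≠ 0) {θ : K}
    {d₁ d₂ : ℕ} (h₁ : f ∣ (X - C θ) ^ d₁ * f.map (iterateFrobenius K p n))
    (h₂ : f.map (iterateFrobenius K p n) ∣ (X - C θ) ^ d₂ * f) :
    ∃ g : K[X], g ≠ 0 ∧ g.map (iterateFrobenius K p n) = g ∧ f ∣ g := by
  classical
  let ι := algebraMap K (AlgebraicClosure K)
  let F := f.map ι
  have hF : F ≠ 0 := (Polynomial.map_ne_zero_iff ι.injective).mpr hf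
  have hcomm : (f.map (iterateFrobenius K p n)).map ι = F.map (iterateFrobenius _ p n) := by
    simp only [F, map_map, RingHom.iterateFrobenius_comm]
  have hmaps := mapsTo_roots_of_dvd_map (bijective_iterateFrobenius _ p n) hF
    (by simpa [hcomm] using Polynomial.map_dvd ι h₁)
    (by simpa [hcomm] using Polynomial.map_dvd ι h₂)
  set N := n * F.roots.toFinset.card.factorial
  have hN : N ≠ 0 := Nat.mul_ne_zero hn.ne' (Nat.factorial_ne_zero _)
  have hperiodic : ∀ a, F.IsRoot a → (X ^ p ^ N - X : (AlgebraicClosure K)[X]).IsRoot a := by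
    intro a ha
    have hmem : a ∈ F.roots.toFinset := Multiset.mem_toFinset.mpr ((mem_roots hF).mpr ha)
    have := hmaps.iterate_factorial_card_apply (iterateFrobenius_inj _ p n).injOn hmem
    rw [← coe_iterateFrobenius_mul, iterateFrobenius_def] at this
    rw [IsRoot, eval_sub, eval_pow, eval_X]
    exact sub_eq_zero.mpr this
  refine ⟨(X ^ p ^ N - X) ^ F.natDegree,
    pow_ne_zero _ (FiniteField.X_pow_card_pow_sub_X_ne_zero K hN (Fact.out : p.Prime).one_lt),
    by simp, ?_⟩
  rw [← map_dvd_map' ι]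
  simpa using dvd_pow_natDegree_of_forall_isRoot hF
    (FiniteField.X_pow_card_pow_sub_X_ne_zero _ hN (Fact.out : p.Prime).one_lt) hperiodic

namespace Matrix

variable {R F : Type*} [CommRing R] [Field F] [Algebra R F] {l m n : Type*}

variable (R) in
def denomIdeal (G : Matrix m n F) : Ideal R where
  carrier := {h | ∀ i j, IsLocalization.IsInteger R (h • G i j)}
  add_mem' ha hb i j := by
    rw [add_smul]
    exact IsLocalization.isInteger_add (ha i j) (hb i j)
  zero_mem' i j := by
    rw [zero_smul]
    exact IsLocalization.isInteger_zero
  smul_mem' c h hh i j := by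
    rw [smul_eq_mul, mul_smul]
    exact IsLocalization.isInteger_smul (hh i j)

theorem mem_denomIdeal_iff {G : Matrix m n F} {h : R} :
    h ∈ denomIdeal R G ↔ ∃ P : Matrix m n R, P.map (algebraMap R F) = algebraMap R F h • G := by
  simp only [denomIdeal, Submodule.mem_mk, AddSubmonoid.mem_mk, AddSubsemigroup.mem_mk,
    IsLocalization.IsInteger, RingHom.mem_rangeS, Algebra.smul_def]
  refine ⟨fun hh => ?_, fun ⟨P, hP⟩ i j => ⟨P i j, ?_⟩⟩
  · choose P hP using hh
    exact ⟨Matrix.of P, by ext i j; simp [hP]⟩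
  · simpa using congrFun (congrFun hP i) j

theorem denomIdeal_ne_bot [IsDomain R] [IsFractionRing R F] [Finite m] [Finite n]
    (G : Matrix m n F) : denomIdeal R G ≠ ⊥ := by
  obtain ⟨b, hb⟩ := IsLocalization.exist_integer_multiples_of_finite (nonZeroDivisors R)
    (fun ij : m × n => G ij.1 ij.2)
  exact (Submodule.ne_bot_iff _).mpr ⟨b, fun i j => hb (i, j), nonZeroDivisors.coe_ne_zero b⟩

theorem denomIdeal_le_mul_left [Fintype m] (S : Matrix l m R) (G : Matrix m n F) :
    denomIdeal R G ≤ denomIdeal R (S.map (algebraMap R F) * G) := by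
  intro h hh
  obtain ⟨P, hP⟩ := mem_denomIdeal_iff.mp hh
  exact mem_denomIdeal_iff.mpr ⟨S * P, by rw [Matrix.map_mul, hP, Matrix.mul_smul]⟩

theorem denomIdeal_le_mul_right [Fintype n] (G : Matrix m n F) (S : Matrix n l R) :
    denomIdeal R G ≤ denomIdeal R (G * S.map (algebraMap R F)) := by
  intro h hh
  obtain ⟨P, hP⟩ := mem_denomIdeal_iff.mp hh
  exact mem_denomIdeal_iff.mpr ⟨P * S, by rw [Matrix.map_mul, hP, Matrix.smul_mul]⟩

theorem map_smul_one {R' : Type*} [Semiring R'] [DecidableEq m] (f : R →+* R') (c : R) :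
    (c • (1 : Matrix m m R)).map f = f c • 1 := by
  rw [smul_one_eq_diagonal, diagonal_map (map_zero _), smul_one_eq_diagonal]

theorem det_mul_mem_denomIdeal_of_mem_mul_left [Fintype m] [DecidableEq m] (S : Matrix m m R)
    {G : Matrix m n F} {h : R} (hh : h ∈ denomIdeal R (S.map (algebraMap R F) * G)) :
    S.det * h ∈ denomIdeal R G := by
  obtain ⟨P, hP⟩ := mem_denomIdeal_iff.mp (denomIdeal_le_mul_left S.adjugate _ hh)
  refine mem_denomIdeal_iff.mpr ⟨P, ?_⟩
  rw [hP, ← Matrix.mul_assoc, ← Matrix.map_mul, Matrix.adjugate_mul, map_smul_one,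
    Matrix.smul_mul, Matrix.one_mul, smul_smul, ← map_mul, mul_comm]

theorem det_mul_mem_denomIdeal_of_mem_mul_right [Fintype n] [DecidableEq n] (S : Matrix n n R)
    {G : Matrix m n F} {h : R} (hh : h ∈ denomIdeal R (G * S.map (algebraMap R F))) :
    S.det * h ∈ denomIdeal R G := by
  obtain ⟨P, hP⟩ := mem_denomIdeal_iff.mp (denomIdeal_le_mul_right _ S.adjugate hh)
  refine mem_denomIdeal_iff.mpr ⟨P, ?_⟩
  rw [hP, Matrix.mul_assoc, ← Matrix.map_mul, Matrix.mul_adjugate, map_smul_one,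
    Matrix.mul_smul, Matrix.mul_one, smul_smul, ← map_mul, mul_comm]

section PrincipalIdealRing

open Submodule.IsPrincipal

variable [IsDomain R] [IsPrincipalIdealRing R] [IsFractionRing R F] [Finite m] [Finite n]

theorem generator_denomIdeal_ne_zero (G : Matrix m n F) : generator (denomIdeal R G) ≠ 0 :=
  fun h => denomIdeal_ne_bot G ((eq_bot_iff_generator_eq_zero _).mpr h)

/-- Unlike the minimality of `generator (denomIdeal R G)`, its coprimality with the entries of
`P` survives ring maps. -/
theorem span_insert_generator_range_eq_top {G : Matrix m n F} {P : Matrix m n R}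
    (hP : P.map (algebraMap R F) = algebraMap R F (generator (denomIdeal R G)) • G) :
    Ideal.span (insert (generator (denomIdeal R G)) (Set.range fun ij : m × n => P ij.1 ij.2))
      = ⊤ := by
  set h₀ := generator (denomIdeal R G)
  set J := Ideal.span (insert h₀ (Set.range fun ij : m × n => P ij.1 ij.2))
  have hh₀ : h₀ ≠ 0 := generator_denomIdeal_ne_zero G
  obtain ⟨e, he⟩ := (mem_iff_generator_dvd J).mp (Ideal.subset_span (Set.mem_insert _ _))
  have hg : algebraMap R F (generator J) ≠ 0 := by
    rw [map_ne_zero_iff _ (IsFractionRing.injective R F)]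
    rintro hg
    exact hh₀ (by rw [he, hg, zero_mul])
  choose Q hQ using fun i j => (mem_iff_generator_dvd J).mp
    (Ideal.subset_span (Set.mem_insert_of_mem _ ⟨(i, j), rfl⟩))
  have he_mem : e ∈ denomIdeal R G := by
    refine mem_denomIdeal_iff.mpr ⟨Matrix.of Q, Matrix.ext fun i j => mul_left_cancel₀ hg ?_⟩
    have hPij := congrFun (congrFun hP i) j
    simp only [Matrix.map_apply, Matrix.smul_apply, smul_eq_mul, hQ, map_mul] at hPij
    rw [Matrix.map_apply, Matrix.of_apply, Matrix.smul_apply, smul_eq_mul, hPij, he, map_mul,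
      mul_assoc]
  obtain ⟨w, hw⟩ := (mem_iff_generator_dvd _).mp he_mem
  have hunit : IsUnit (generator J) :=
    IsUnit.of_mul_eq_one w <| mul_left_cancel₀ hh₀ <| calc
      h₀ * (generator J * w) = generator J * (h₀ * w) := mul_left_comm _ _ _
      _ = h₀ * 1 := by rw [← hw, ← he, mul_one]
  rw [← span_singleton_generator J, Ideal.submodule_span_eq, Ideal.span_singleton_eq_top.mpr hunit]

end PrincipalIdealRing

section Map

variable {R' F' : Type*} [CommRing R'] [Field F'] [Algebra R' F']
  {φ : R →+* R'} {Φ : F →+* F'} (hΦ : Φ.comp (algebraMap R F) = (algebraMap R' F').comp φ)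
include hΦ

theorem map_map_algebraMap (P : Matrix m n R) :
    (P.map φ).map (algebraMap R' F') = (P.map (algebraMap R F)).map Φ := by
  simp only [Matrix.map_map, ← RingHom.coe_comp, hΦ]

theorem map_map_eq_smul_map {G : Matrix m n F} {P : Matrix m n R} {h : R}
    (hP : P.map (algebraMap R F) = algebraMap R F h • G) :
    (P.map φ).map (algebraMap R' F') = algebraMap R' F' (φ h) • G.map Φ := by
  rw [map_map_algebraMap hΦ, hP, Matrix.map_smulₛₗ _ Φ _ (map_mul Φ _), ← RingHom.comp_apply, hΦ,
    RingHom.comp_apply]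

theorem map_mem_denomIdeal_map {G : Matrix m n F} {h : R} (hh : h ∈ denomIdeal R G) :
    φ h ∈ denomIdeal R' (G.map Φ) := by
  obtain ⟨P, hP⟩ := mem_denomIdeal_iff.mp hh
  exact mem_denomIdeal_iff.mpr ⟨P.map φ, map_map_eq_smul_map hΦ hP⟩

open Submodule.IsPrincipal in
theorem map_generator_dvd_of_mem_denomIdeal_map [IsDomain R] [IsPrincipalIdealRing R]
    [IsFractionRing R F] [IsFractionRing R' F'] [Finite m] [Finite n] {G : Matrix m n F} {h : R'}
    (hh : h ∈ denomIdeal R' (G.map Φ)) : φ (generator (denomIdeal R G)) ∣ h := by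
  set h₀ := generator (denomIdeal R G)
  obtain ⟨P, hP⟩ := mem_denomIdeal_iff.mp (generator_mem (denomIdeal R G))
  obtain ⟨Q, hQ⟩ := mem_denomIdeal_iff.mp hh
  have hφP : ∀ i j, φ h₀ * Q i j = h * φ (P i j) := fun i j => by
    have hφPij := congrFun (congrFun (map_map_eq_smul_map hΦ hP) i) j
    have hQij := congrFun (congrFun hQ i) j
    simp only [Matrix.map_apply, Matrix.smul_apply, smul_eq_mul] at hφPij hQij
    apply IsFractionRing.injective R' F'
    rw [map_mul, map_mul, hQij, hφPij, mul_left_comm]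
  have hspan : Ideal.span {h} ≤ Ideal.span {φ h₀} := calc
    Ideal.span {h} = Ideal.span {h} *
        (Ideal.span (insert h₀ (Set.range fun ij : m × n => P ij.1 ij.2))).map φ := by
      rw [span_insert_generator_range_eq_top hP, Ideal.map_top, Ideal.mul_top]
    _ ≤ Ideal.span {φ h₀} := by
      rw [Ideal.map_span, Ideal.span_mul_span', Ideal.span_le]
      rintro _ ⟨_, rfl, _, ⟨y, hy, rfl⟩, rfl⟩
      rw [SetLike.mem_coe, Ideal.mem_span_singleton]
      rcases hy with rfl | ⟨⟨i, j⟩, rfl⟩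
      · exact dvd_mul_left _ _
      · exact ⟨Q i j, (hφP i j).symm⟩
  exact Ideal.span_singleton_le_span_singleton.mp hspan

end Map

theorem mul_eq_mul_map_of_map_eq_smul [Fintype m] [Fintype n] [IsFractionRing R F] {φ : R →+* R}
    {Φ : F →+* F} (hΦ : Φ.comp (algebraMap R F) = (algebraMap R F).comp φ)
    {S₁ : Matrix n n R} {S₂ : Matrix m m R} {G : Matrix m n F}
    (hG : G * S₁.map (algebraMap R F) = S₂.map (algebraMap R F) * G.map Φ)
    {P : Matrix m n R} {h : R} (hP : P.map (algebraMap R F) = algebraMap R F h • G)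
    (hh : φ h = h) : P * S₁ = S₂ * P.map φ := by
  refine Matrix.map_injective (IsFractionRing.injective R F) ?_
  dsimp only
  rw [Matrix.map_mul, Matrix.map_mul, hP, map_map_eq_smul_map hΦ hP, hh, Matrix.smul_mul, hG,
    Matrix.mul_smul]

end Matrix

theorem tauRatFunc_comp_algebraMap (p n : ℕ) [Fact p.Prime] (K : Type) [Field K] [CharP K p] :
    (tauRatFunc p n K).comp (algebraMap K[X] (RatFunc K))
      = (algebraMap K[X] (RatFunc K)).comp (mapRingHom (iterateFrobenius K p n)) :=
  RingHom.ext fun f => by simp [tauRatFunc, RatFunc.coe_mapRingHom_eq_coe_map, RatFunc.map_apply]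

open Matrix Submodule.IsPrincipal in
theorem stmt_2
    (p n : ℕ) [Fact p.Prime] (hn : 0 < n)
    (K : Type) [Field K] [CharP K p] (θ : K)
    (r₁ r₂ : ℕ)
    (S₁ : Matrix (Fin r₁) (Fin r₁) (Polynomial K))
    (S₂ : Matrix (Fin r₂) (Fin r₂) (Polynomial K))
    (u₁ u₂ : Kˣ) (d₁ d₂ : ℕ)
    (h₁ : S₁.det = C (u₁ : K) * (X - C θ) ^ d₁)
    (h₂ : S₂.det = C (u₂ : K) * (X - C θ) ^ d₂)
    -- `g : M₁(t) → M₂(t)`, a `K(t)`-linear map commuting with `σ`: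
    (G : Matrix (Fin r₂) (Fin r₁) (RatFunc K))
    (hG : G * S₁.map (algebraMap (Polynomial K) (RatFunc K)) =
          S₂.map (algebraMap (Polynomial K) (RatFunc K)) * G.map (tauRatFunc p n K)) :
    -- there are `h ∈ k[t] \ {0}` and `f = F ∈ Hom_σ(M₁, M₂)` with `h • g = f ⊗ id`:
    ∃ (h : Polynomial K) (F : Matrix (Fin r₂) (Fin r₁) (Polynomial K)),
      h ≠ 0 ∧ (∀ i, (h.coeff i) ^ p ^ n = h.coeff i) ∧
      F * S₁ = S₂ * F.map (Polynomial.mapRingHom (iterateFrobenius K p n)) ∧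
      algebraMap (Polynomial K) (RatFunc K) h • G =
        F.map (algebraMap (Polynomial K) (RatFunc K)) := by
  have hτ := tauRatFunc_comp_algebraMap p n K
  set h₀ := generator (denomIdeal K[X] G)
  have hunit : ∀ u : Kˣ, IsUnit (C (u : K)) := fun u => isUnit_C.mpr u.isUnit
  have hdvd₂ : h₀.map (iterateFrobenius K p n) ∣ (X - C θ) ^ d₂ * h₀ := by
    have hmem : S₂.det * h₀ ∈ denomIdeal K[X] (G.map (tauRatFunc p n K)) :=
      det_mul_mem_denomIdeal_of_mem_mul_left S₂ <| by
        rw [← hG]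
        exact denomIdeal_le_mul_right G S₁ (generator_mem _)
    have := map_generator_dvd_of_mem_denomIdeal_map hτ hmem
    rwa [h₂, mul_assoc, (hunit u₂).dvd_mul_left] at this
  have hdvd₁ : h₀ ∣ (X - C θ) ^ d₁ * h₀.map (iterateFrobenius K p n) := by
    have hmem : S₁.det * h₀.map (iterateFrobenius K p n) ∈ denomIdeal K[X] G :=
      det_mul_mem_denomIdeal_of_mem_mul_right S₁ <| by
        rw [hG]
        exact denomIdeal_le_mul_left S₂ _ (map_mem_denomIdeal_map hτ (generator_mem _))
    rwa [mem_iff_generator_dvd, h₁, mul_assoc, (hunit u₁).dvd_mul_left] at hmem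
  obtain ⟨h, hh, hτh, hdvd⟩ :=
    exists_map_iterateFrobenius_eq_self_of_dvd hn (generator_denomIdeal_ne_zero G) hdvd₁ hdvd₂
  obtain ⟨F, hF⟩ := mem_denomIdeal_iff.mp ((mem_iff_generator_dvd _).mpr hdvd)
  refine ⟨h, F, hh, fun i => ?_, mul_eq_mul_map_of_map_eq_smul hτ hG hF hτh, hF.symm⟩
  simpa [iterateFrobenius_def] using congr_arg (coeff · i) hτh
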